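/- arXiv:2404.19724 — 5 statements merged into one kernel-verified Lean document; each statement's English description precedes it below -/
import Mathlib

section
/- Logarithmic transform of a supermartingale: Let M be a finitely-branching MDP with absorbing terminal state ⊥ and initial state σ, and let V : S → ℝ be nonnegative with V(⊥) = 0, a supermartingale function on Reach(σ), and such that every sublevel set {s ∈ Reach(σ) : V(s) ≤ r} (r ∈ ℝ) is finite. Define V₀(s) = ln(1 + V(s)). Then V₀ is nonnegative, V₀(⊥) = 0, V₀ is a supermartingale function on Reach(σ), every sublevel set {s ∈ Reach(σ) : V₀(s) ≤ r} is finite, and for every s ∈ Reach(σ) and every action μ ∈ Act(s) whose support contains some s' with V(s') ≠ V(s), the strict inequality V₀(s) > Σ_{s'} μ(s')·V₀(s') holds. -/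
/-!
On `(-1, ∞)` the map `g x = log (1 + x)` is strictly concave and strictly increasing. For an
action `μ` at `s`, Jensen's inequality and the supermartingale property of `V` give
`E_μ[g ∘ V] ≤ g (E_μ[V]) ≤ g (V s)`. If `V` is not constant on the support of `μ`, the first
step is strict; if it is constant, its value is `E_μ[V] ≤ V s`, and it differs from `V s` as soon
as some successor `s'` has `V s' ≠ V s`, so the second step is strict.
-/

open scoped ENNReal Classical

/-- A finitely-branching MDP on a state space `S`: each state has a nonempty finite
set of available actions, each a finitely-supported PMF on `S`. -/
structure MDP (S : Type) where
  act : S → Finset (PMF S)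
  act_nonempty : ∀ s, (act s).Nonempty
  act_finSupp : ∀ s, ∀ μ ∈ act s, (μ : PMF S).support.Finite

/-- A scheduler maps every history `(s₀, …, sₙ)` (given as the list of earlier
states `s₀, …, sₙ₋₁` together with the current state `sₙ`) to an available action. -/
structure Scheduler {S : Type} (M : MDP S) where
  choose : List S → S → PMF S
  choose_mem : ∀ hist s, choose hist s ∈ M.act s

namespace MDP

variable {S : Type}

/-- Reachability: `s'` is reachable from `σ` via a finite path each of whose steps
lies in the support of some available action. -/
inductive Reach (M : MDP S) (σ : S) : S → Prop
  | refl : Reach M σ σ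
  | step {s s' : S} (μ : PMF S) : Reach M σ s → μ ∈ M.act s → s' ∈ μ.support → Reach M σ s'

/-- Probability that the run (currently at `s`, with past history `hist`) visits the
set `T` within the next `k` steps, under scheduler `𝔰`. -/
noncomputable def hitProbAux (M : MDP S) (𝔰 : Scheduler M) (T : Set S) :
    ℕ → List S → S → ℝ≥0∞
  | 0, _, s => if s ∈ T then 1 else 0
  | k + 1, hist, s =>
      if s ∈ T then 1
      else ∑' s', (𝔰.choose hist s) s' * hitProbAux M 𝔰 T k (hist ++ [s]) s'

/-- Probability that the run started at `σ` visits `T` within the first `k` steps. -/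
noncomputable def hitProbWithin (M : MDP S) (𝔰 : Scheduler M) (σ : S) (T : Set S)
    (k : ℕ) : ℝ≥0∞ :=
  hitProbAux M 𝔰 T k [] σ

/-- Probability that the run started at `σ` ever visits `T`, under scheduler `𝔰`. -/
noncomputable def hitProb (M : MDP S) (𝔰 : Scheduler M) (σ : S) (T : Set S) : ℝ≥0∞ :=
  ⨆ k, hitProbWithin M 𝔰 σ T k

/-- The terminal state `term` is absorbing: the only action there is the Dirac PMF. -/
def Absorbing (M : MDP S) (term : S) : Prop :=
  M.act term = {PMF.pure term}

/-- Termination probability: infimum over schedulers of the probability of visiting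
the terminal state. -/
noncomputable def PrTerm (M : MDP S) (term σ : S) : ℝ≥0∞ :=
  ⨅ 𝔰 : Scheduler M, hitProb M 𝔰 σ {term}

/-- Almost-sure termination from `σ`. -/
def AST (M : MDP S) (term σ : S) : Prop := PrTerm M term σ = 1

/-- Mass a PMF assigns to a set. -/
noncomputable def mass (μ : PMF S) (A : Set S) : ℝ≥0∞ := ∑' a : A, μ a

/-- Expected value of a real-valued function under a (finitely supported) PMF. -/
noncomputable def expect (μ : PMF S) (V : S → ℝ) : ℝ := ∑' s, (μ s).toReal * V s

/-- `V` is a supermartingale function on the states reachable from `σ`. -/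
def SupermartingaleOn (M : MDP S) (σ : S) (V : S → ℝ) : Prop :=
  ∀ s, M.Reach σ s → ∀ μ ∈ M.act s, expect μ V ≤ V s

/-- `(Ψ, p)` is a stochastic invariant for initial state `σ`: under every scheduler the
probability that the run ever leaves `Ψ` is at most `p`. -/
def StochasticInvariant (M : MDP S) (σ : S) (Ψ : Set S) (p : ℝ) : Prop :=
  ⨆ 𝔰 : Scheduler M, hitProb M 𝔰 σ Ψᶜ ≤ ENNReal.ofReal p

end MDP

namespace MDP

variable {α : Type} {μ : PMF α}

theorem expect_eq_sum (hμ : μ.support.Finite) (f : α → ℝ) :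
    expect μ f = ∑ a ∈ hμ.toFinset, (μ a).toReal * f a :=
  tsum_eq_sum fun a ha => by simp [show μ a = 0 by simpa using ha]

theorem sum_toReal_eq_one (hμ : μ.support.Finite) : ∑ a ∈ hμ.toFinset, (μ a).toReal = 1 := by
  have hsum : ∑' a, μ a = ∑ a ∈ hμ.toFinset, μ a :=
    tsum_eq_sum fun a ha => by simpa using ha
  rw [← ENNReal.toReal_sum fun a _ => μ.apply_ne_top a, ← hsum, μ.tsum_coe, ENNReal.toReal_one]

theorem expect_eq_of_forall_support (hμ : μ.support.Finite) {f : α → ℝ} {c : ℝ}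
    (hf : ∀ a ∈ μ.support, f a = c) : expect μ f = c := by
  rw [expect_eq_sum hμ, Finset.sum_congr rfl fun a ha => by rw [hf a (hμ.mem_toFinset.1 ha)],
    ← Finset.sum_mul, sum_toReal_eq_one hμ, one_mul]

theorem expect_mem_of_convex (hμ : μ.support.Finite) {I : Set ℝ} (hI : Convex ℝ I)
    {V : α → ℝ} (hV : ∀ a ∈ μ.support, V a ∈ I) : expect μ V ∈ I := by
  rw [expect_eq_sum hμ]
  exact hI.sum_mem (fun _ _ => ENNReal.toReal_nonneg) (sum_toReal_eq_one hμ)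
    fun a ha => hV a (hμ.mem_toFinset.1 ha)

end MDP

namespace StrictConcaveOn

open MDP

variable {α : Type} {μ : PMF α} {I : Set ℝ} {g : ℝ → ℝ} {V : α → ℝ}

theorem expect_comp_lt (hg : StrictConcaveOn ℝ I g) (hμ : μ.support.Finite)
    (hV : ∀ a ∈ μ.support, V a ∈ I) (hne : ∃ j ∈ μ.support, ∃ k ∈ μ.support, V j ≠ V k) :
    expect μ (fun a => g (V a)) < g (expect μ V) := by
  simp only [expect_eq_sum hμ, ← smul_eq_mul]
  obtain ⟨j, hj, k, hk, hjk⟩ := hne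
  exact hg.lt_map_sum
    (fun a ha => ENNReal.toReal_pos (hμ.mem_toFinset.1 ha) (μ.apply_ne_top a))
    (sum_toReal_eq_one hμ) (fun a ha => hV a (hμ.mem_toFinset.1 ha))
    ⟨j, hμ.mem_toFinset.2 hj, k, hμ.mem_toFinset.2 hk, hjk⟩

theorem expect_comp_lt_of_expect_le (hg : StrictConcaveOn ℝ I g) (hg_mono : StrictMonoOn g I)
    (hμ : μ.support.Finite) (hV : ∀ a ∈ μ.support, V a ∈ I) {x : ℝ} (hx : x ∈ I)
    (hle : expect μ V ≤ x) (hne : ∃ a ∈ μ.support, V a ≠ x) :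
    expect μ (fun a => g (V a)) < g x := by
  obtain ⟨j, hj, hjx⟩ := hne
  by_cases hconst : ∀ a ∈ μ.support, V a = V j
  · have hjlt : V j < x := (expect_eq_of_forall_support hμ hconst ▸ hle).lt_of_ne hjx
    rw [expect_eq_of_forall_support hμ fun a ha => congrArg g (hconst a ha)]
    exact hg_mono (hV j hj) hx hjlt
  · push Not at hconst
    obtain ⟨k, hk, hkj⟩ := hconst
    calc expect μ (fun a => g (V a))
        < g (expect μ V) := hg.expect_comp_lt hμ hV ⟨k, hk, j, hj, hkj⟩
      _ ≤ g x := hg_mono.monotoneOn (expect_mem_of_convex hμ hg.1 hV) hx hle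

theorem expect_comp_le_of_expect_le (hg : StrictConcaveOn ℝ I g) (hg_mono : StrictMonoOn g I)
    (hμ : μ.support.Finite) (hV : ∀ a ∈ μ.support, V a ∈ I) {x : ℝ} (hx : x ∈ I)
    (hle : expect μ V ≤ x) : expect μ (fun a => g (V a)) ≤ g x := by
  by_cases hne : ∃ a ∈ μ.support, V a ≠ x
  · exact (hg.expect_comp_lt_of_expect_le hg_mono hμ hV hx hle hne).le
  · push Not at hne
    exact (expect_eq_of_forall_support hμ fun a ha => congrArg g (hne a ha)).le

end StrictConcaveOn

theorem strictConcaveOn_log_one_add :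
    StrictConcaveOn ℝ (Set.Ioi (-1)) fun x => Real.log (1 + x) :=
  (strictConcaveOn_log_Ioi.translate_right 1).subset
    (fun x hx => by simp only [Set.mem_Ioi, Set.mem_preimage] at hx ⊢; linarith) (convex_Ioi _)

theorem strictMonoOn_log_one_add : StrictMonoOn (fun x => Real.log (1 + x)) (Set.Ioi (-1)) :=
  fun x hx _ _ hxy => Real.log_lt_log (by rw [Set.mem_Ioi] at hx; linarith) (by linarith)

theorem log_transform_supermartingale_general {S : Type} (M : MDP S) (term σ : S)
    (V : S → ℝ) (hVnn : ∀ s, 0 ≤ V s) (hV0 : V term = 0)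
    (hVsm : M.SupermartingaleOn σ V)
    (hsub : ∀ r : ℝ, {s | M.Reach σ s ∧ V s ≤ r}.Finite) :
    (∀ s, 0 ≤ Real.log (1 + V s)) ∧
    Real.log (1 + V term) = 0 ∧
    M.SupermartingaleOn σ (fun s => Real.log (1 + V s)) ∧
    (∀ r : ℝ, {s | M.Reach σ s ∧ Real.log (1 + V s) ≤ r}.Finite) ∧
    (∀ s, M.Reach σ s → ∀ μ ∈ M.act s, (∃ s' ∈ μ.support, V s' ≠ V s) →
      MDP.expect μ (fun s' => Real.log (1 + V s')) < Real.log (1 + V s)) := by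
  have hV : ∀ s, V s ∈ Set.Ioi (-1) := fun s => by rw [Set.mem_Ioi]; linarith [hVnn s]
  refine ⟨fun s => Real.log_nonneg (by linarith [hVnn s]), by simp [hV0],
    fun s hs μ hμ => ?_, fun r => ?_, fun s hs μ hμ hne => ?_⟩
  · exact strictConcaveOn_log_one_add.expect_comp_le_of_expect_le strictMonoOn_log_one_add
      (M.act_finSupp s μ hμ) (fun a _ => hV a) (hV s) (hVsm s hs μ hμ)
  · refine (hsub (Real.exp r - 1)).subset fun s ⟨hs, hr⟩ => ⟨hs, ?_⟩
    linarith [(Real.log_le_iff_le_exp (by linarith [hVnn s])).1 hr]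
  · exact strictConcaveOn_log_one_add.expect_comp_lt_of_expect_le strictMonoOn_log_one_add
      (M.act_finSupp s μ hμ) (fun a _ => hV a) (hV s) (hVsm s hs μ hμ) hne

/-- **Logarithmic transform of a supermartingale.** If `V` is nonnegative, zero at the
terminal state, a supermartingale function on the reachable states, with all sublevel
sets finite, then `V₀ s = ln (1 + V s)` is nonnegative, zero at the terminal state, a
supermartingale function on the reachable states with finite sublevel sets, and for every
reachable state `s` and action `μ` whose support contains some `s'` with `V s' ≠ V s`, the
supermartingale inequality for `V₀` at `s, μ` is strict. -/
theorem log_transform_supermartingale {S : Type} [Countable S] (M : MDP S) (term σ : S)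
    (hterm : M.Absorbing term)
    (V : S → ℝ) (hVnn : ∀ s, 0 ≤ V s) (hV0 : V term = 0)
    (hVsm : M.SupermartingaleOn σ V)
    (hsub : ∀ r : ℝ, {s | M.Reach σ s ∧ V s ≤ r}.Finite) :
    (∀ s, 0 ≤ Real.log (1 + V s)) ∧
    Real.log (1 + V term) = 0 ∧
    M.SupermartingaleOn σ (fun s => Real.log (1 + V s)) ∧
    (∀ r : ℝ, {s | M.Reach σ s ∧ Real.log (1 + V s) ≤ r}.Finite) ∧
    (∀ s, M.Reach σ s → ∀ μ ∈ M.act s, (∃ s' ∈ μ.support, V s' ≠ V s) →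
      MDP.expect μ (fun s' => Real.log (1 + V s')) < Real.log (1 + V s)) :=
  log_transform_supermartingale_general M term σ V hVnn hV0 hVsm hsub
end

section
/- Correspondence between stochastic invariants and stochastic invariant indicators: Let M be a finitely-branching MDP with initial state σ and let p ∈ [0,1]. (i) If SI : S → ℝ is nonnegative, is a supermartingale function on Reach(σ), and satisfies SI(σ) ≤ p, then the pair (Ψ, p) with Ψ = {s ∈ S : SI(s) < 1} is a stochastic invariant for σ. (ii) Conversely, if (Ψ, p) is a stochastic invariant for σ, then there exists a nonnegative function SI : S → ℝ that is a supermartingale function on Reach(σ), satisfies SI(σ) ≤ p, and satisfies {s ∈ Reach(σ) : SI(s) < 1} ⊆ Ψ. -/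
open scoped ENNReal Classical

/-! Part (i): by induction on the horizon, the probability of reaching `{SI ≥ 1}` from a reachable
state `s` is at most `SI s`, because `SI ≥ 1` there and `SI` does not increase in expectation.
Part (ii): take `SI` to be the maximal probability of ever leaving `Ψ`, computed by value
iteration. Each iterate is attained by a scheduler following the maximising action for the
remaining horizon, so `SI σ ≤ p`; the limit satisfies the Bellman inequality by monotone
convergence, hence is a supermartingale, and it equals `1` outside `Ψ`. -/

theorem ENNReal.tsum_iSup_of_monotone {α ι : Type*} [Preorder ι] [IsDirectedOrder ι]
    {f : ι → α → ℝ≥0∞} (hf : Monotone f) : ∑' a, ⨆ i, f i a = ⨆ i, ∑' a, f i a := by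
  simp_rw [ENNReal.tsum_eq_iSup_sum,
    ENNReal.finsetSum_iSup_of_monotone (f := fun a i => f i a) fun a _ _ h => hf h a]
  exact iSup_comm

theorem PMF.tsum_mul_le_one {α : Type*} (μ : PMF α) {W : α → ℝ≥0∞} (hW : ∀ a, W a ≤ 1) :
    ∑' a, μ a * W a ≤ 1 :=
  (ENNReal.tsum_le_tsum fun a => mul_le_of_le_one_right' (hW a)).trans_eq μ.tsum_coe

namespace MDP

variable {S : Type}

theorem ofReal_expect {μ : PMF S} (hμ : μ.support.Finite) {V : S → ℝ} (hV : ∀ s, 0 ≤ V s) :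
    ENNReal.ofReal (expect μ V) = ∑' s, μ s * ENNReal.ofReal (V s) := by
  have hsupp : (Function.support fun s => (μ s).toReal * V s) ⊆ μ.support := fun s hs hμs =>
    hs (by simp [hμs])
  rw [expect, ENNReal.ofReal_tsum_of_nonneg (fun s => mul_nonneg ENNReal.toReal_nonneg (hV s))
    (summable_of_hasFiniteSupport (hμ.subset hsupp))]
  refine tsum_congr fun s => ?_
  rw [ENNReal.ofReal_mul ENNReal.toReal_nonneg, ENNReal.ofReal_toReal (μ.apply_ne_top s)]

variable (M : MDP S)

theorem hitProbAux_le_of_superharmonic (𝔰 : Scheduler M) {σ : S} {T : Set S} {W : S → ℝ≥0∞}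
    (hT : ∀ s ∈ T, 1 ≤ W s) (hW : ∀ s, M.Reach σ s → ∀ μ ∈ M.act s, ∑' t, μ t * W t ≤ W s)
    (k : ℕ) (hist : List S) {s : S} (hs : M.Reach σ s) : M.hitProbAux 𝔰 T k hist s ≤ W s := by
  induction k generalizing hist s with
  | zero =>
    rw [hitProbAux]
    split_ifs with hsT
    exacts [hT s hsT, zero_le]
  | succ k ih =>
    rw [hitProbAux]
    split_ifs with hsT
    · exact hT s hsT
    set μ := 𝔰.choose hist s
    have hμ : μ ∈ M.act s := 𝔰.choose_mem hist s
    calc ∑' t, μ t * M.hitProbAux 𝔰 T k (hist ++ [s]) t ≤ ∑' t, μ t * W t := by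
          refine ENNReal.tsum_le_tsum fun t => ?_
          by_cases hμt : μ t = 0
          · simp [hμt]
          exact mul_le_mul_right (ih _ (.step μ hs hμ ((μ.mem_support_iff t).2 hμt))) _
      _ ≤ W s := hW s hs μ hμ

theorem hitProb_le_of_superharmonic (𝔰 : Scheduler M) {σ : S} {T : Set S} {W : S → ℝ≥0∞}
    (hT : ∀ s ∈ T, 1 ≤ W s) (hW : ∀ s, M.Reach σ s → ∀ μ ∈ M.act s, ∑' t, μ t * W t ≤ W s) :
    M.hitProb 𝔰 σ T ≤ W σ :=
  iSup_le fun k => M.hitProbAux_le_of_superharmonic 𝔰 hT hW k [] .refl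

theorem stochasticInvariant_of_supermartingaleOn {σ : S} {p : ℝ} {SI : S → ℝ}
    (hSI : ∀ s, 0 ≤ SI s) (hsm : M.SupermartingaleOn σ SI) (hσ : SI σ ≤ p) :
    M.StochasticInvariant σ {s | SI s < 1} p := by
  refine iSup_le fun 𝔰 => (M.hitProb_le_of_superharmonic 𝔰 (W := fun s => .ofReal (SI s))
    (fun s hs => ?_) fun s hs μ hμ => ?_).trans (ENNReal.ofReal_le_ofReal hσ)
  · exact ENNReal.one_le_ofReal.2 (not_lt.1 hs)
  · rw [← ofReal_expect (M.act_finSupp s μ hμ) hSI]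
    exact ENNReal.ofReal_le_ofReal (hsm s hs μ hμ)

/-- Value iteration for the maximal probability of reaching `T` within `k` steps. -/
noncomputable def optHitProbWithin (T : Set S) : ℕ → S → ℝ≥0∞
  | 0, s => if s ∈ T then 1 else 0
  | k + 1, s => if s ∈ T then 1 else
      (M.act s).sup fun μ => ∑' t, μ t * optHitProbWithin T k t

noncomputable def optHitProb (T : Set S) (s : S) : ℝ≥0∞ :=
  ⨆ k, M.optHitProbWithin T k s

theorem optHitProbWithin_le_one (T : Set S) (k : ℕ) (s : S) : M.optHitProbWithin T k s ≤ 1 := by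
  induction k generalizing s with
  | zero =>
    rw [optHitProbWithin]
    split_ifs <;> simp
  | succ k ih =>
    rw [optHitProbWithin]
    split_ifs
    exacts [le_rfl, Finset.sup_le fun μ _ => μ.tsum_mul_le_one ih]

theorem optHitProbWithin_mono (T : Set S) : Monotone (M.optHitProbWithin T) := by
  refine monotone_nat_of_le_succ fun k => ?_
  induction k with
  | zero =>
    intro s
    simp only [optHitProbWithin]
    split_ifs <;> simp
  | succ k ih =>
    intro s
    rw [optHitProbWithin, optHitProbWithin]
    split_ifs
    exacts [le_rfl, Finset.sup_mono_fun fun μ _ =>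
      ENNReal.tsum_le_tsum fun t => mul_le_mul_right (ih t) _]

variable {M} in
theorem tsum_mul_optHitProbWithin_le {T : Set S} {s : S} {μ : PMF S} (hμ : μ ∈ M.act s)
    (k : ℕ) : ∑' t, μ t * M.optHitProbWithin T k t ≤ M.optHitProbWithin T (k + 1) s := by
  rw [optHitProbWithin.eq_2]
  split_ifs
  exacts [μ.tsum_mul_le_one (M.optHitProbWithin_le_one T k),
    Finset.le_sup (f := fun μ => ∑' t, μ t * M.optHitProbWithin T k t) hμ]

theorem exists_optAction (T : Set S) (k : ℕ) (s : S) : ∃ μ ∈ M.act s,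
    (M.act s).sup (fun μ => ∑' t, μ t * M.optHitProbWithin T k t) =
      ∑' t, μ t * M.optHitProbWithin T k t :=
  Finset.exists_mem_eq_sup _ (M.act_nonempty s) _

noncomputable def optAction (T : Set S) (k : ℕ) (s : S) : PMF S :=
  (M.exists_optAction T k s).choose

theorem optAction_mem (T : Set S) (k : ℕ) (s : S) : M.optAction T k s ∈ M.act s :=
  (M.exists_optAction T k s).choose_spec.1

theorem sup_eq_tsum_optAction (T : Set S) (k : ℕ) (s : S) :
    (M.act s).sup (fun μ => ∑' t, μ t * M.optHitProbWithin T k t) =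
      ∑' t, M.optAction T k s t * M.optHitProbWithin T k t :=
  (M.exists_optAction T k s).choose_spec.2

/-- Plays, on a history of length `m`, the maximising action of value iteration with the
`n - 1 - m` steps that remain. -/
noncomputable def optScheduler (T : Set S) (n : ℕ) : Scheduler M where
  choose hist s := M.optAction T (n - 1 - hist.length) s
  choose_mem _ s := M.optAction_mem T _ s

theorem hitProbAux_optScheduler (T : Set S) (n j : ℕ) (hist : List S) (s : S)
    (hn : hist.length + j = n) :
    M.hitProbAux (M.optScheduler T n) T j hist s = M.optHitProbWithin T j s := by
  induction j generalizing hist s with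
  | zero => simp only [hitProbAux, optHitProbWithin]
  | succ j ih =>
    rw [hitProbAux, optHitProbWithin]
    split_ifs
    · rfl
    have hchoose : (M.optScheduler T n).choose hist s = M.optAction T j s := by
      simp only [optScheduler, show n - 1 - hist.length = j by omega]
    rw [hchoose, sup_eq_tsum_optAction]
    exact tsum_congr fun t => by rw [ih _ _ (by simp; omega)]

theorem optHitProb_le_iSup_hitProb (T : Set S) (s : S) :
    M.optHitProb T s ≤ ⨆ 𝔰 : Scheduler M, M.hitProb 𝔰 s T := by
  refine iSup_le fun k => ?_
  calc M.optHitProbWithin T k s = M.hitProbWithin (M.optScheduler T k) s T k :=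
        (M.hitProbAux_optScheduler T k k [] s (by simp)).symm
    _ ≤ M.hitProb (M.optScheduler T k) s T := le_iSup (M.hitProbWithin _ s T) k
    _ ≤ ⨆ 𝔰 : Scheduler M, M.hitProb 𝔰 s T := le_iSup (fun 𝔰 => M.hitProb 𝔰 s T) _

theorem optHitProb_ne_top (T : Set S) (s : S) : M.optHitProb T s ≠ ⊤ :=
  ((iSup_le fun k => M.optHitProbWithin_le_one T k s).trans_lt ENNReal.one_lt_top).ne

theorem one_le_optHitProb {T : Set S} {s : S} (hs : s ∈ T) : 1 ≤ M.optHitProb T s :=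
  le_iSup_of_le 0 (by simp [optHitProbWithin, hs])

variable {M} in
theorem tsum_mul_optHitProb_le {T : Set S} {s : S} {μ : PMF S} (hμ : μ ∈ M.act s) :
    ∑' t, μ t * M.optHitProb T t ≤ M.optHitProb T s := by
  have hmono : Monotone fun k t => μ t * M.optHitProbWithin T k t :=
    fun _ _ hkl t => mul_le_mul_right (M.optHitProbWithin_mono T hkl t) _
  calc ∑' t, μ t * M.optHitProb T t = ⨆ k, ∑' t, μ t * M.optHitProbWithin T k t := by
        simp_rw [optHitProb, ENNReal.mul_iSup]
        exact ENNReal.tsum_iSup_of_monotone hmono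
    _ ≤ ⨆ k, M.optHitProbWithin T (k + 1) s := iSup_mono (tsum_mul_optHitProbWithin_le hμ)
    _ ≤ M.optHitProb T s := iSup_le fun k => le_iSup (M.optHitProbWithin T · s) (k + 1)

theorem exists_supermartingaleOn_of_stochasticInvariant {σ : S} {p : ℝ} (hp : 0 ≤ p)
    {Ψ : Set S} (hΨ : M.StochasticInvariant σ Ψ p) :
    ∃ SI : S → ℝ, (∀ s, 0 ≤ SI s) ∧ M.SupermartingaleOn σ SI ∧ SI σ ≤ p ∧
      {s | M.Reach σ s ∧ SI s < 1} ⊆ Ψ := by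
  refine ⟨fun s => (M.optHitProb Ψᶜ s).toReal, fun s => ENNReal.toReal_nonneg, ?_, ?_, ?_⟩
  · intro s _ μ hμ
    rw [← ENNReal.ofReal_le_ofReal_iff ENNReal.toReal_nonneg,
      ofReal_expect (M.act_finSupp s μ hμ) fun _ => ENNReal.toReal_nonneg]
    simp only [ENNReal.ofReal_toReal (M.optHitProb_ne_top _ _)]
    exact tsum_mul_optHitProb_le hμ
  · exact ENNReal.toReal_le_of_le_ofReal hp ((M.optHitProb_le_iSup_hitProb _ σ).trans hΨ)
  · rintro s ⟨-, hs⟩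
    by_contra hsΨ
    have hle := ENNReal.toReal_mono (M.optHitProb_ne_top _ s) (M.one_le_optHitProb (T := Ψᶜ) hsΨ)
    exact hs.not_ge (by simpa using hle)

end MDP

theorem stochastic_invariant_indicator_correspondence_general {S : Type} (M : MDP S)
    (σ : S) (p : ℝ) (hp0 : 0 ≤ p) :
    (∀ SI : S → ℝ, (∀ s, 0 ≤ SI s) → M.SupermartingaleOn σ SI → SI σ ≤ p →
      M.StochasticInvariant σ {s | SI s < 1} p) ∧
    (∀ Ψ : Set S, M.StochasticInvariant σ Ψ p →
      ∃ SI : S → ℝ, (∀ s, 0 ≤ SI s) ∧ M.SupermartingaleOn σ SI ∧ SI σ ≤ p ∧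
        {s | M.Reach σ s ∧ SI s < 1} ⊆ Ψ) :=
  ⟨fun _ hSI hsm hσ => M.stochasticInvariant_of_supermartingaleOn hSI hsm hσ,
    fun _ hΨ => M.exists_supermartingaleOn_of_stochasticInvariant hp0 hΨ⟩

/-- **Correspondence between stochastic invariants and stochastic invariant indicators.**
(i) Any nonnegative supermartingale function `SI` on the reachable states with `SI σ ≤ p`
yields a stochastic invariant `({s | SI s < 1}, p)` for `σ`.
(ii) Conversely, every stochastic invariant `(Ψ, p)` for `σ` is witnessed by a nonnegative
supermartingale function `SI` with `SI σ ≤ p` whose reachable sub-one level set is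
contained in `Ψ`. -/
theorem stochastic_invariant_indicator_correspondence {S : Type} [Countable S] (M : MDP S)
    (σ : S) (p : ℝ) (hp0 : 0 ≤ p) (hp1 : p ≤ 1) :
    (∀ SI : S → ℝ, (∀ s, 0 ≤ SI s) → M.SupermartingaleOn σ SI → SI σ ≤ p →
      M.StochasticInvariant σ {s | SI s < 1} p) ∧
    (∀ Ψ : Set S, M.StochasticInvariant σ Ψ p →
      ∃ SI : S → ℝ, (∀ s, 0 ≤ SI s) ∧ M.SupermartingaleOn σ SI ∧ SI σ ≤ p ∧
        {s | M.Reach σ s ∧ SI s < 1} ⊆ Ψ) :=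
  stochastic_invariant_indicator_correspondence_general M σ p hp0
end

section
/- Soundness of the upper bound rule: Let M be a finitely-branching MDP with absorbing terminal state ⊥ and initial state σ, and let p ∈ (0,1). Suppose there exists a nonnegative function SI : S → ℝ that is a supermartingale function on Reach(σ) and satisfies SI(σ) ≤ p and SI(⊥) ≥ 1. Then for every scheduler 𝔰, ℙ_{𝔰,σ}(the run visits ⊥) ≤ p; in particular Pr_term(σ) ≤ p. -/
open scoped ENNReal Classical

/-!
For a nonnegative supermartingale function `V` with `V ≥ 1` on `T`, induction on the horizon
`k` shows that the probability of hitting `T` within `k` steps from a reachable state `s` is at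
most `V s`: on `T` the bound is `1 ≤ V s`, and off `T` one step of the scheduler averages the
induction hypothesis over the successors, which the supermartingale inequality bounds by
`V s`. Letting `k → ∞` bounds the hitting probability by `V σ ≤ p`.
-/

namespace MDP

variable {S : Type}

theorem tsum_mul_ofReal_eq_ofReal_expect {μ : PMF S} (hμ : μ.support.Finite)
    {V : S → ℝ} (hV : ∀ s, 0 ≤ V s) :
    ∑' s, μ s * ENNReal.ofReal (V s) = ENNReal.ofReal (expect μ V) := by
  have hsupp : (fun s => (μ s).toReal * V s).support ⊆ μ.support := fun s hs h0 =>
    hs (by simp [h0])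
  have hsum : Summable fun s => (μ s).toReal * V s :=
    summable_of_hasFiniteSupport (hμ.subset hsupp)
  rw [expect, ENNReal.ofReal_tsum_of_nonneg (fun s => mul_nonneg ENNReal.toReal_nonneg (hV s)) hsum]
  refine tsum_congr fun s => ?_
  rw [ENNReal.ofReal_mul ENNReal.toReal_nonneg, ENNReal.ofReal_toReal (μ.apply_ne_top s)]

variable (M : MDP S) (𝔰 : Scheduler M) {σ : S} {T : Set S} {V : S → ℝ}

instance : Nonempty (Scheduler M) :=
  ⟨⟨fun _ s => (M.act_nonempty s).choose, fun _ s => (M.act_nonempty s).choose_spec⟩⟩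

theorem hitProbAux_le_of_supermartingaleOn (hV : ∀ s, 0 ≤ V s)
    (hsm : M.SupermartingaleOn σ V) (hT : ∀ t ∈ T, 1 ≤ V t)
    (k : ℕ) (hist : List S) {s : S} (hreach : M.Reach σ s) :
    M.hitProbAux 𝔰 T k hist s ≤ ENNReal.ofReal (V s) := by
  induction k generalizing hist s with
  | zero => by_cases hs : s ∈ T <;> simp [hitProbAux, hs, hT]
  | succ k ih =>
    by_cases hs : s ∈ T
    · simp [hitProbAux, hs, hT]
    set μ := 𝔰.choose hist s
    have hμ : μ ∈ M.act s := 𝔰.choose_mem hist s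
    calc M.hitProbAux 𝔰 T (k + 1) hist s
        = ∑' s', μ s' * M.hitProbAux 𝔰 T k (hist ++ [s]) s' := by simp [hitProbAux, hs, μ]
      _ ≤ ∑' s', μ s' * ENNReal.ofReal (V s') := by
        refine ENNReal.tsum_le_tsum fun s' => ?_
        by_cases h0 : μ s' = 0
        · simp [h0]
        · exact mul_le_mul_right (ih _ (.step μ hreach hμ h0)) _
      _ = ENNReal.ofReal (expect μ V) :=
        tsum_mul_ofReal_eq_ofReal_expect (M.act_finSupp s μ hμ) hV
      _ ≤ ENNReal.ofReal (V s) := ENNReal.ofReal_le_ofReal (hsm s hreach μ hμ)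

theorem hitProb_le_of_supermartingaleOn (hV : ∀ s, 0 ≤ V s)
    (hsm : M.SupermartingaleOn σ V) (hT : ∀ t ∈ T, 1 ≤ V t) :
    M.hitProb 𝔰 σ T ≤ ENNReal.ofReal (V σ) :=
  iSup_le fun k => M.hitProbAux_le_of_supermartingaleOn 𝔰 hV hsm hT k [] .refl

end MDP

theorem upper_bound_rule_sound_general {S : Type} (M : MDP S) (term σ : S)
    (p : ℝ)
    (SI : S → ℝ) (hnn : ∀ s, 0 ≤ SI s)
    (hsm : M.SupermartingaleOn σ SI)
    (hinit : SI σ ≤ p) (hone : 1 ≤ SI term) :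
    (∀ 𝔰 : Scheduler M, M.hitProb 𝔰 σ {term} ≤ ENNReal.ofReal p) ∧
    M.PrTerm term σ ≤ ENNReal.ofReal p := by
  have hbound : ∀ 𝔰 : Scheduler M, M.hitProb 𝔰 σ {term} ≤ ENNReal.ofReal p := fun 𝔰 =>
    (M.hitProb_le_of_supermartingaleOn 𝔰 hnn hsm (by simpa using hone)).trans
      (ENNReal.ofReal_le_ofReal hinit)
  exact ⟨hbound, (iInf_le _ (Classical.arbitrary _)).trans (hbound _)⟩

/-- **Soundness of the upper bound rule.** If there is a nonnegative supermartingale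
function `SI` on the reachable states with `SI σ ≤ p` and `SI term ≥ 1`, then under every
scheduler the probability of visiting the terminal state is at most `p`; in particular the
termination probability is at most `p`. -/
theorem upper_bound_rule_sound {S : Type} [Countable S] (M : MDP S) (term σ : S)
    (hterm : M.Absorbing term)
    (p : ℝ) (hp0 : 0 < p) (hp1 : p < 1)
    (SI : S → ℝ) (hnn : ∀ s, 0 ≤ SI s)
    (hsm : M.SupermartingaleOn σ SI)
    (hinit : SI σ ≤ p) (hone : 1 ≤ SI term) :
    (∀ 𝔰 : Scheduler M, M.hitProb 𝔰 σ {term} ≤ ENNReal.ofReal p) ∧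
    M.PrTerm term σ ≤ ENNReal.ofReal p :=
  upper_bound_rule_sound_general M term σ p SI hnn hsm hinit hone
end

section
/- Soundness of the stochastic-invariant rule for lower bounds: Let M be a finitely-branching MDP with absorbing terminal state ⊥ and initial state σ, let p ∈ [0,1], and let (Ψ, p) be a stochastic invariant for σ. Suppose moreover that for every scheduler 𝔰, ℙ_{𝔰,σ}(the run visits ⊥ or some state of the run lies outside Ψ) = 1. Then for every scheduler 𝔰, ℙ_{𝔰,σ}(the run visits ⊥) ≥ 1 − p; in particular Pr_term(σ) ≥ 1 − p. -/
open scoped ENNReal Classical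

namespace MDP

variable {S : Type}

variable (M : MDP S) (𝔰 : Scheduler M)

theorem hitProbAux_union_le (A B : Set S) (k : ℕ) (hist : List S) (s : S) :
    M.hitProbAux 𝔰 (A ∪ B) k hist s ≤ M.hitProbAux 𝔰 A k hist s + M.hitProbAux 𝔰 B k hist s := by
  induction k generalizing hist s with
  | zero =>
    simp only [hitProbAux, Set.mem_union]
    split_ifs <;> simp_all
  | succ k ih =>
    by_cases hAB : s ∈ A ∪ B
    · rcases hAB with hA | hB
      · simp [hitProbAux, hA]
      · simp [hitProbAux, hB]
    have hA : s ∉ A := fun h => hAB (Or.inl h)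
    have hB : s ∉ B := fun h => hAB (Or.inr h)
    simp only [hitProbAux, if_neg hAB, if_neg hA, if_neg hB]
    calc ∑' s', 𝔰.choose hist s s' * M.hitProbAux 𝔰 (A ∪ B) k (hist ++ [s]) s'
        ≤ ∑' s', (𝔰.choose hist s s' * M.hitProbAux 𝔰 A k (hist ++ [s]) s' +
            𝔰.choose hist s s' * M.hitProbAux 𝔰 B k (hist ++ [s]) s') :=
          ENNReal.tsum_le_tsum fun s' => (mul_le_mul_right (ih _ _) _).trans_eq (mul_add ..)
      _ = _ := ENNReal.tsum_add

theorem hitProb_union_le (σ : S) (A B : Set S) :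
    M.hitProb 𝔰 σ (A ∪ B) ≤ M.hitProb 𝔰 σ A + M.hitProb 𝔰 σ B :=
  iSup_le fun k => (hitProbAux_union_le M 𝔰 A B k [] σ).trans
    (add_le_add (le_iSup (M.hitProbWithin 𝔰 σ A) k) (le_iSup (M.hitProbWithin 𝔰 σ B) k))

theorem StochasticInvariant.hitProb_compl_le {σ : S} {Ψ : Set S} {p : ℝ}
    (hSI : M.StochasticInvariant σ Ψ p) : M.hitProb 𝔰 σ Ψᶜ ≤ ENNReal.ofReal p :=
  (le_iSup (fun 𝔰 : Scheduler M => M.hitProb 𝔰 σ Ψᶜ) 𝔰).trans hSI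

end MDP

theorem lower_bound_rule_sound_general {S : Type} (M : MDP S) (term σ : S)
    (p : ℝ) (hp0 : 0 ≤ p)
    (Ψ : Set S) (hSI : M.StochasticInvariant σ Ψ p)
    (hAS : ∀ 𝔰 : Scheduler M, M.hitProb 𝔰 σ ({term} ∪ Ψᶜ) = 1) :
    (∀ 𝔰 : Scheduler M, ENNReal.ofReal (1 - p) ≤ M.hitProb 𝔰 σ {term}) ∧
    ENNReal.ofReal (1 - p) ≤ M.PrTerm term σ := by
  have hterm_lb : ∀ 𝔰 : Scheduler M, ENNReal.ofReal (1 - p) ≤ M.hitProb 𝔰 σ {term} := by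
    intro 𝔰
    have hcover : 1 ≤ M.hitProb 𝔰 σ {term} + ENNReal.ofReal p :=
      calc 1 = M.hitProb 𝔰 σ ({term} ∪ Ψᶜ) := (hAS 𝔰).symm
        _ ≤ M.hitProb 𝔰 σ {term} + M.hitProb 𝔰 σ Ψᶜ := M.hitProb_union_le 𝔰 σ _ _
        _ ≤ M.hitProb 𝔰 σ {term} + ENNReal.ofReal p := by gcongr; exact hSI.hitProb_compl_le M 𝔰
    rw [ENNReal.ofReal_sub 1 hp0, ENNReal.ofReal_one]
    exact tsub_le_iff_right.mpr hcover
  exact ⟨hterm_lb, le_iInf hterm_lb⟩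

/-- **Soundness of the stochastic-invariant rule for lower bounds.** If `(Ψ, p)` is a
stochastic invariant for `σ` and, under every scheduler, the run almost surely either
visits the terminal state or leaves `Ψ`, then under every scheduler the probability of
visiting the terminal state is at least `1 - p`; in particular the termination probability
is at least `1 - p`. -/
theorem lower_bound_rule_sound {S : Type} [Countable S] (M : MDP S) (term σ : S)
    (hterm : M.Absorbing term)
    (p : ℝ) (hp0 : 0 ≤ p) (hp1 : p ≤ 1)
    (Ψ : Set S) (hSI : M.StochasticInvariant σ Ψ p)
    (hAS : ∀ 𝔰 : Scheduler M, M.hitProb 𝔰 σ ({term} ∪ Ψᶜ) = 1) :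
    (∀ 𝔰 : Scheduler M, ENNReal.ofReal (1 - p) ≤ M.hitProb 𝔰 σ {term}) ∧
    ENNReal.ofReal (1 - p) ≤ M.PrTerm term σ :=
  lower_bound_rule_sound_general M term σ p hp0 Ψ hSI hAS
end

section
/- Finite-state completeness of the stochastic-invariant rule for lower bounds: Let M be a finitely-branching MDP with absorbing terminal state ⊥ whose state space S is finite, with initial state σ, and suppose Pr_term(σ) ≥ 1 − p for some p ∈ [0,1). Then there exists a set Ψ ⊆ S with σ ∈ Ψ and ⊥ ∈ Ψ such that (Ψ, p) is a stochastic invariant for σ and, for every scheduler 𝔰, ℙ_{𝔰,σ}(the run visits ⊥ or some state of the run lies outside Ψ) = 1. -/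
/-!
Let `Z` be the set of states where the value iteration
`V₀ = 𝟙_{⊥}`, `Vₖ₊₁(s) = min_{μ ∈ Act(s)} ∑ μ(s') Vₖ(s')` for reaching `⊥` stays `0`, and take
`Ψ = Zᶜ`. As `Act(z)` is finite and `Vₖ` increases with `k`, every `z ∈ Z` has an action
supported in `Z`; playing these actions traps the run in `Z`, away from `⊥`. Switching any
scheduler to this trap on entering `Z` gives `Pr_term(σ) + ℙ(reach Z) ≤ 1`, so `Z` is reached
with probability at most `p`, and `σ ∉ Z` because `Pr_term(σ) > 0`. Conversely, finiteness of
`S` gives `N` and `δ > 0` with `V_N ≥ δ` outside `Z`, so from every history the run reaches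
`{⊥} ∪ Z` within `N` steps with probability at least `δ`, hence almost surely.
-/

open scoped ENNReal Classical

theorem PMF.tsum_mul_le {α : Type*} (μ : PMF α) {f : α → ℝ≥0∞} {c : ℝ≥0∞} (h : ∀ a, f a ≤ c) :
    ∑' a, μ a * f a ≤ c :=
  calc ∑' a, μ a * f a ≤ ∑' a, μ a * c := ENNReal.tsum_le_tsum fun a => mul_le_mul_right (h a) _
    _ = c := by rw [ENNReal.tsum_mul_right, μ.tsum_coe, one_mul]

namespace Scheduler

variable {S : Type} {M : MDP S}

def StaysIn (𝔱 : Scheduler M) (C : Set S) : Prop :=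
  ∀ hist, ∀ s ∈ C, (𝔱.choose hist s).support ⊆ C

noncomputable def switch (𝔰 𝔱 : Scheduler M) (C : Set S) : Scheduler M where
  choose hist s := if s ∈ C then 𝔱.choose hist s else 𝔰.choose hist s
  choose_mem hist s := by split_ifs <;> apply choose_mem

theorem staysIn_switch (𝔰 : Scheduler M) {𝔱 : Scheduler M} {C : Set S} (h : 𝔱.StaysIn C) :
    (𝔰.switch 𝔱 C).StaysIn C := fun hist s hs => by
  simpa only [switch, if_pos hs] using h hist s hs

end Scheduler

namespace MDP

variable {S : Type} {M : MDP S}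

theorem Absorbing.staysIn {term : S} (h : M.Absorbing term) (𝔰 : Scheduler M) :
    𝔰.StaysIn {term} := by
  rintro hist s rfl
  have hmem := 𝔰.choose_mem hist s
  rw [h, Finset.mem_singleton] at hmem
  simp [hmem]

section Hitting

variable (𝔰 : Scheduler M) {T : Set S}

theorem hitProbAux_le_one : ∀ k hist s, M.hitProbAux 𝔰 T k hist s ≤ 1
  | 0, _, _ => by simp only [hitProbAux]; split <;> simp
  | k + 1, hist, s => by
    simp only [hitProbAux]
    split
    · exact le_rfl
    · exact PMF.tsum_mul_le _ fun s' => hitProbAux_le_one k _ s'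

theorem hitProb_le_one (σ : S) : M.hitProb 𝔰 σ T ≤ 1 :=
  iSup_le fun k => hitProbAux_le_one 𝔰 k [] σ

theorem hitProbAux_le_succ : ∀ k hist s, M.hitProbAux 𝔰 T k hist s ≤ M.hitProbAux 𝔰 T (k + 1) hist s
  | 0, hist, s => by simp only [hitProbAux]; split <;> simp
  | k + 1, hist, s => by
    simp only [hitProbAux]
    split
    · exact le_rfl
    · exact ENNReal.tsum_le_tsum fun s' => mul_le_mul_right (hitProbAux_le_succ k _ s') _

theorem monotone_hitProbAux (hist : List S) (s : S) :
    Monotone fun k => M.hitProbAux 𝔰 T k hist s :=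
  monotone_nat_of_le_succ fun k => hitProbAux_le_succ 𝔰 k hist s

theorem hitProbAux_mono {T' : Set S} (hTT' : T ⊆ T') :
    ∀ k hist s, M.hitProbAux 𝔰 T k hist s ≤ M.hitProbAux 𝔰 T' k hist s
  | 0, hist, s => by
    by_cases hs : s ∈ T <;> simp [hitProbAux, hs, hTT' _]
  | k + 1, hist, s => by
    by_cases hs : s ∈ T
    · simp [hitProbAux, hs, hTT' hs]
    by_cases hs' : s ∈ T'
    · simp only [hitProbAux, if_neg hs, if_pos hs']
      exact PMF.tsum_mul_le _ fun s' => hitProbAux_le_one 𝔰 k _ s'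
    · simp only [hitProbAux, if_neg hs, if_neg hs']
      exact ENNReal.tsum_le_tsum fun s' => mul_le_mul_right (hitProbAux_mono hTT' k _ s') _

theorem hitProbAux_eq_zero_of_staysIn {C : Set S} (h : 𝔰.StaysIn C) (hTC : Disjoint T C) :
    ∀ k hist, ∀ s ∈ C, M.hitProbAux 𝔰 T k hist s = 0
  | 0, hist, s, hs => by simp [hitProbAux, hTC.notMem_of_mem_right hs]
  | k + 1, hist, s, hs => by
    simp only [hitProbAux, if_neg (hTC.notMem_of_mem_right hs)]
    refine ENNReal.tsum_eq_zero.2 fun s' => ?_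
    by_cases hs' : s' ∈ (𝔰.choose hist s).support
    · rw [hitProbAux_eq_zero_of_staysIn h hTC k _ s' (h hist s hs hs'), mul_zero]
    · rw [(PMF.apply_eq_zero_iff _ _).2 hs', zero_mul]

theorem hitProb_eq_zero_of_staysIn {C : Set S} (h : 𝔰.StaysIn C) (hTC : Disjoint T C)
    {σ : S} (hσ : σ ∈ C) : M.hitProb 𝔰 σ T = 0 :=
  ENNReal.iSup_eq_zero.2 fun k => hitProbAux_eq_zero_of_staysIn 𝔰 h hTC k [] σ hσ

/-- Once in `C`, the switched scheduler never reaches the absorbing `term`, whereas before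
entering `C` it follows `𝔰`. -/
theorem hitProbAux_switch_add_hitProbAux_le_one {term : S} (hterm : M.Absorbing term)
    {𝔱 : Scheduler M} {C : Set S} (h𝔱 : 𝔱.StaysIn C) (hC : term ∉ C) :
    ∀ k hist s, M.hitProbAux (𝔰.switch 𝔱 C) {term} k hist s + M.hitProbAux 𝔰 C k hist s ≤ 1
  | k, hist, s => by
    have hdisj : Disjoint ({term} : Set S) C := Set.disjoint_singleton_left.2 hC
    by_cases hsC : s ∈ C
    · rw [hitProbAux_eq_zero_of_staysIn _ (𝔰.staysIn_switch h𝔱) hdisj k hist s hsC, zero_add]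
      exact hitProbAux_le_one 𝔰 k hist s
    by_cases hst : s = term
    · subst hst
      rw [hitProbAux_eq_zero_of_staysIn 𝔰 (hterm.staysIn 𝔰) hdisj.symm k hist s rfl, add_zero]
      exact hitProbAux_le_one _ k hist s
    have hs : s ∉ ({term} : Set S) := hst
    cases k with
    | zero => simp [hitProbAux, hs, hsC]
    | succ k =>
      simp only [hitProbAux, if_neg hs, if_neg hsC, Scheduler.switch, ← ENNReal.tsum_add, ← mul_add]
      exact PMF.tsum_mul_le _ fun s' =>
        hitProbAux_switch_add_hitProbAux_le_one hterm h𝔱 hC k _ s'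
termination_by k => k

theorem hitProb_switch_add_hitProb_le_one {term : S} (hterm : M.Absorbing term)
    {𝔱 : Scheduler M} {C : Set S} (h𝔱 : 𝔱.StaysIn C) (hC : term ∉ C) (σ : S) :
    M.hitProb (𝔰.switch 𝔱 C) σ {term} + M.hitProb 𝔰 σ C ≤ 1 := by
  rw [hitProb, hitProb]
  unfold hitProbWithin
  rw [ENNReal.iSup_add_iSup_of_monotone (monotone_hitProbAux _ [] σ)
    (monotone_hitProbAux _ [] σ)]
  exact iSup_le fun k => hitProbAux_switch_add_hitProbAux_le_one 𝔰 hterm h𝔱 hC k [] σ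

end Hitting

section Avoiding

noncomputable def avoidProbAux (M : MDP S) (𝔰 : Scheduler M) (T : Set S) :
    ℕ → List S → S → ℝ≥0∞
  | 0, _, s => if s ∈ T then 0 else 1
  | k + 1, hist, s =>
      if s ∈ T then 0
      else ∑' s', (𝔰.choose hist s) s' * avoidProbAux M 𝔰 T k (hist ++ [s]) s'

variable (𝔰 : Scheduler M) {T : Set S}

theorem avoidProbAux_of_mem {s : S} (hs : s ∈ T) (k : ℕ) (hist : List S) :
    M.avoidProbAux 𝔰 T k hist s = 0 := by
  cases k <;> simp [avoidProbAux, hs]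

theorem hitProbAux_add_avoidProbAux :
    ∀ k hist s, M.hitProbAux 𝔰 T k hist s + M.avoidProbAux 𝔰 T k hist s = 1
  | 0, hist, s => by by_cases hs : s ∈ T <;> simp [hitProbAux, avoidProbAux, hs]
  | k + 1, hist, s => by
    by_cases hs : s ∈ T
    · simp [hitProbAux, avoidProbAux, hs]
    · simp only [hitProbAux, avoidProbAux, if_neg hs, ← ENNReal.tsum_add, ← mul_add,
        hitProbAux_add_avoidProbAux k, mul_one, PMF.tsum_coe]

theorem avoidProbAux_le_one (k : ℕ) (hist : List S) (s : S) : M.avoidProbAux 𝔰 T k hist s ≤ 1 :=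
  hitProbAux_add_avoidProbAux 𝔰 k hist s ▸ le_add_self

/-- Avoiding `T` for `a + m` steps means avoiding it for `a` steps and then, from wherever the
run is, for `m` more. -/
theorem avoidProbAux_add_le {m : ℕ} {c : ℝ≥0∞} (hc : ∀ hist s, M.avoidProbAux 𝔰 T m hist s ≤ c) :
    ∀ a hist s, M.avoidProbAux 𝔰 T (a + m) hist s ≤ c * M.avoidProbAux 𝔰 T a hist s
  | 0, hist, s => by
    by_cases hs : s ∈ T
    · simp [avoidProbAux_of_mem 𝔰 hs]
    · simpa [avoidProbAux, hs] using hc hist s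
  | a + 1, hist, s => by
    rw [Nat.add_right_comm]
    by_cases hs : s ∈ T
    · simp [avoidProbAux_of_mem 𝔰 hs]
    simp only [avoidProbAux, if_neg hs, ← ENNReal.tsum_mul_left]
    refine ENNReal.tsum_le_tsum fun s' => ?_
    rw [mul_left_comm]
    exact mul_le_mul_right (avoidProbAux_add_le hc a _ s') _

theorem avoidProbAux_mul_le_pow {m : ℕ} {c : ℝ≥0∞}
    (hc : ∀ hist s, M.avoidProbAux 𝔰 T m hist s ≤ c) (hist : List S) (s : S) :
    ∀ n, M.avoidProbAux 𝔰 T (n * m) hist s ≤ c ^ n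
  | 0 => by simpa using avoidProbAux_le_one 𝔰 0 hist s
  | n + 1 => by
    rw [Nat.succ_mul, pow_succ']
    exact (avoidProbAux_add_le 𝔰 hc (n * m) hist s).trans
      (mul_le_mul_right (avoidProbAux_mul_le_pow hc hist s n) c)

/-- The chance of avoiding `T` for `n * N` steps is at most `(1 - δ) ^ n`. -/
theorem hitProb_eq_one_of_le_hitProbAux {N : ℕ} {δ : ℝ≥0∞} (hδ : 0 < δ)
    (h : ∀ hist, ∀ s ∉ T, δ ≤ M.hitProbAux 𝔰 T N hist s) (σ : S) : M.hitProb 𝔰 σ T = 1 := by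
  have havoid : ∀ hist s, M.avoidProbAux 𝔰 T N hist s ≤ 1 - δ := by
    intro hist s
    by_cases hs : s ∈ T
    · simp [avoidProbAux_of_mem 𝔰 hs]
    have hδ1 : δ ≤ 1 := (h hist s hs).trans (hitProbAux_le_one 𝔰 N hist s)
    refine ENNReal.le_sub_of_add_le_left (ne_top_of_le_ne_top ENNReal.one_ne_top hδ1) ?_
    rw [← hitProbAux_add_avoidProbAux 𝔰 (T := T) N hist s]
    exact add_le_add_left (h hist s hs) _
  have hlow : ∀ n : ℕ, 1 ≤ M.hitProb 𝔰 σ T + (1 - δ) ^ n := fun n =>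
    calc 1 = M.hitProbAux 𝔰 T (n * N) [] σ + M.avoidProbAux 𝔰 T (n * N) [] σ :=
          (hitProbAux_add_avoidProbAux 𝔰 _ _ _).symm
      _ ≤ M.hitProb 𝔰 σ T + (1 - δ) ^ n :=
          add_le_add (le_iSup (M.hitProbWithin 𝔰 σ T) (n * N))
            (avoidProbAux_mul_le_pow 𝔰 havoid [] σ n)
  have hlim : Filter.Tendsto (fun n : ℕ => M.hitProb 𝔰 σ T + (1 - δ) ^ n) Filter.atTop
      (nhds (M.hitProb 𝔰 σ T)) := by
    simpa using (ENNReal.tendsto_pow_atTop_nhds_zero_of_lt_one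
      (ENNReal.sub_lt_self ENNReal.one_ne_top one_ne_zero hδ.ne')).const_add (M.hitProb 𝔰 σ T)
  exact le_antisymm (hitProb_le_one 𝔰 σ) (ge_of_tendsto' hlim hlow)

end Avoiding

section ValueIteration

variable (M) (T : Set S)

noncomputable def minHitProbWithin : ℕ → S → ℝ≥0∞
  | 0, s => if s ∈ T then 1 else 0
  | k + 1, s => if s ∈ T then 1 else ⨅ μ ∈ M.act s, ∑' s', μ s' * minHitProbWithin k s'

def avoidableSet : Set S := {s | ∀ k, M.minHitProbWithin T k s = 0}

variable {M T}

theorem minHitProbWithin_le_succ :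
    ∀ k s, M.minHitProbWithin T k s ≤ M.minHitProbWithin T (k + 1) s
  | 0, s => by simp only [minHitProbWithin]; split <;> simp
  | k + 1, s => by
    simp only [minHitProbWithin]
    split
    · exact le_rfl
    · exact iInf₂_mono fun μ _ => ENNReal.tsum_le_tsum fun s' =>
        mul_le_mul_right (minHitProbWithin_le_succ k s') _

theorem monotone_minHitProbWithin (s : S) : Monotone fun k => M.minHitProbWithin T k s :=
  monotone_nat_of_le_succ fun k => minHitProbWithin_le_succ k s

theorem minHitProbWithin_le_hitProbAux (𝔰 : Scheduler M) :
    ∀ k hist s, M.minHitProbWithin T k s ≤ M.hitProbAux 𝔰 T k hist s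
  | 0, hist, s => by simp only [minHitProbWithin, hitProbAux]; split <;> simp
  | k + 1, hist, s => by
    simp only [minHitProbWithin, hitProbAux]
    split
    · exact le_rfl
    · exact (iInf₂_le _ (𝔰.choose_mem hist s)).trans <| ENNReal.tsum_le_tsum fun s' =>
        mul_le_mul_right (minHitProbWithin_le_hitProbAux 𝔰 k _ s') _

theorem disjoint_avoidableSet : Disjoint T (M.avoidableSet T) :=
  Set.disjoint_left.2 fun s hs hs' => by simpa [minHitProbWithin, hs] using hs' 0

/-- Since `act z` is finite and the values increase with `k`, the minimising actions can be
chosen independently of `k`; such an action keeps all its successors at value `0`. -/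
theorem exists_support_subset_avoidableSet {z : S} (hz : z ∈ M.avoidableSet T) :
    ∃ μ ∈ M.act z, μ.support ⊆ M.avoidableSet T := by
  have hzT : z ∉ T := disjoint_avoidableSet.notMem_of_mem_right hz
  let f : PMF S → ℕ → ℝ≥0∞ := fun μ k => ∑' s', μ s' * M.minHitProbWithin T k s'
  have hf : ∀ μ ∈ (M.act z : Set (PMF S)), Monotone (f μ) := fun μ _ k l hkl =>
    ENNReal.tsum_le_tsum fun s' => mul_le_mul_right (monotone_minHitProbWithin s' hkl) _
  have hzero : ⨅ μ ∈ (M.act z : Set (PMF S)), ⨆ k, f μ k = 0 := by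
    rw [← (M.act z).finite_toSet.iSup_biInf_of_monotone hf]
    exact ENNReal.iSup_eq_zero.2 fun k => by simpa [minHitProbWithin, hzT] using hz (k + 1)
  obtain ⟨μ, hμ, hmin⟩ := (M.act z).exists_min_image (fun μ => ⨆ k, f μ k) (M.act_nonempty z)
  have hμzero : ⨆ k, f μ k = 0 := le_antisymm (hzero ▸ le_iInf₂ hmin) bot_le
  refine ⟨μ, hμ, fun s' hs' k => ?_⟩
  have hzero' := ENNReal.tsum_eq_zero.1 (ENNReal.iSup_eq_zero.1 hμzero k) s'
  exact (mul_eq_zero.1 hzero').resolve_left hs'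

theorem exists_scheduler_staysIn_avoidableSet :
    ∃ 𝔱 : Scheduler M, 𝔱.StaysIn (M.avoidableSet T) := by
  have hchoice : ∀ s, ∃ μ ∈ M.act s, s ∈ M.avoidableSet T → μ.support ⊆ M.avoidableSet T := by
    intro s
    by_cases hs : s ∈ M.avoidableSet T
    · obtain ⟨μ, hμ, hsupp⟩ := exists_support_subset_avoidableSet hs
      exact ⟨μ, hμ, fun _ => hsupp⟩
    · exact ⟨_, (M.act_nonempty s).choose_spec, fun h => absurd h hs⟩
  choose κ hκ hκsupp using hchoice
  exact ⟨⟨fun _ s => κ s, fun _ s => hκ s⟩, fun _ s hs => hκsupp s hs⟩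

theorem exists_le_minHitProbWithin [Finite S] :
    ∃ N δ, 0 < δ ∧ ∀ s ∉ M.avoidableSet T, δ ≤ M.minHitProbWithin T N s := by
  have := Fintype.ofFinite S
  have hpos : ∀ s, ∃ k, s ∉ M.avoidableSet T → 0 < M.minHitProbWithin T k s := by
    intro s
    by_cases hs : s ∈ M.avoidableSet T
    · exact ⟨0, fun h => absurd hs h⟩
    · obtain ⟨k, hk⟩ := not_forall.1 hs
      exact ⟨k, fun _ => pos_iff_ne_zero.2 hk⟩
  choose k hk using hpos
  let N := Finset.univ.sup k
  have hposN : ∀ s ∉ M.avoidableSet T, 0 < M.minHitProbWithin T N s := fun s hs =>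
    (hk s hs).trans_le (monotone_minHitProbWithin s (Finset.le_sup (Finset.mem_univ s)))
  let F := Finset.univ.filter (· ∉ M.avoidableSet T)
  refine ⟨N, F.inf (M.minHitProbWithin T N), ?_, fun s hs => Finset.inf_le (by simpa [F] using hs)⟩
  exact (Finset.lt_inf_iff ENNReal.zero_lt_top).2 fun s hs => hposN s (by simpa [F] using hs)

end ValueIteration

theorem hitProb_union_avoidableSet_eq_one [Finite S] (T : Set S) (𝔰 : Scheduler M) (σ : S) :
    M.hitProb 𝔰 σ (T ∪ M.avoidableSet T) = 1 := by
  obtain ⟨N, δ, hδ, hN⟩ := exists_le_minHitProbWithin (M := M) (T := T)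
  refine hitProb_eq_one_of_le_hitProbAux 𝔰 (N := N) hδ (fun hist s hs => ?_) σ
  calc δ ≤ M.minHitProbWithin T N s := hN s fun h => hs (Or.inr h)
    _ ≤ M.hitProbAux 𝔰 T N hist s := minHitProbWithin_le_hitProbAux 𝔰 N hist s
    _ ≤ M.hitProbAux 𝔰 (T ∪ M.avoidableSet T) N hist s :=
        hitProbAux_mono 𝔰 Set.subset_union_left N hist s

theorem PrTerm_eq_zero_of_mem_avoidableSet {term z : S} (hz : z ∈ M.avoidableSet {term}) :
    M.PrTerm term z = 0 := by
  obtain ⟨𝔱, h𝔱⟩ := exists_scheduler_staysIn_avoidableSet (M := M) (T := {term})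
  exact le_antisymm ((iInf_le _ 𝔱).trans
    (hitProb_eq_zero_of_staysIn 𝔱 h𝔱 disjoint_avoidableSet hz).le) bot_le

/-- Switch `𝔰` on entering the avoidable set to a scheduler that never terminates from there. -/
theorem PrTerm_add_hitProb_avoidableSet_le_one {term : S} (hterm : M.Absorbing term)
    (𝔰 : Scheduler M) (σ : S) : M.PrTerm term σ + M.hitProb 𝔰 σ (M.avoidableSet {term}) ≤ 1 := by
  obtain ⟨𝔱, h𝔱⟩ := exists_scheduler_staysIn_avoidableSet (M := M) (T := {term})
  have hterm' : term ∉ M.avoidableSet {term} :=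
    disjoint_avoidableSet.notMem_of_mem_left rfl
  exact (add_le_add_left (iInf_le _ _) _).trans
    (hitProb_switch_add_hitProb_le_one 𝔰 hterm h𝔱 hterm' σ)

end MDP

theorem lower_bound_rule_complete_finite_general {S : Type} [Fintype S] (M : MDP S) (term σ : S)
    (hterm : M.Absorbing term)
    (p : ℝ) (hp1 : p < 1)
    (hlb : ENNReal.ofReal (1 - p) ≤ M.PrTerm term σ) :
    ∃ Ψ : Set S, σ ∈ Ψ ∧ term ∈ Ψ ∧
      M.StochasticInvariant σ Ψ p ∧
      ∀ 𝔰 : Scheduler M, M.hitProb 𝔰 σ ({term} ∪ Ψᶜ) = 1 := by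
  set Z := M.avoidableSet {term}
  have hσ : σ ∉ Z := fun hσ => (ENNReal.ofReal_pos.2 (sub_pos.2 hp1)).not_ge
    (MDP.PrTerm_eq_zero_of_mem_avoidableSet hσ ▸ hlb)
  have hterm' : term ∉ Z := MDP.disjoint_avoidableSet.notMem_of_mem_left rfl
  refine ⟨Zᶜ, hσ, hterm', iSup_le fun 𝔰 => ?_, fun 𝔰 => ?_⟩
  · rw [compl_compl]
    refine (ENNReal.add_le_add_iff_left (ENNReal.ofReal_ne_top (r := 1 - p))).1 ?_
    calc ENNReal.ofReal (1 - p) + M.hitProb 𝔰 σ Z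
        ≤ M.PrTerm term σ + M.hitProb 𝔰 σ Z := add_le_add_left hlb _
      _ ≤ ENNReal.ofReal (1 - p + p) := by
        simpa using MDP.PrTerm_add_hitProb_avoidableSet_le_one hterm 𝔰 σ
      _ ≤ ENNReal.ofReal (1 - p) + ENNReal.ofReal p := ENNReal.ofReal_add_le
  · rw [compl_compl]
    exact MDP.hitProb_union_avoidableSet_eq_one {term} 𝔰 σ

/-- **Finite-state completeness of the stochastic-invariant rule for lower bounds.** If the
state space is finite and the termination probability from `σ` is at least `1 - p`, then
there is a set `Ψ` containing `σ` and the terminal state such that `(Ψ, p)` is a stochastic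
invariant for `σ` and, under every scheduler, the run almost surely either visits the
terminal state or leaves `Ψ`. -/
theorem lower_bound_rule_complete_finite {S : Type} [Fintype S] (M : MDP S) (term σ : S)
    (hterm : M.Absorbing term)
    (p : ℝ) (hp0 : 0 ≤ p) (hp1 : p < 1)
    (hlb : ENNReal.ofReal (1 - p) ≤ M.PrTerm term σ) :
    ∃ Ψ : Set S, σ ∈ Ψ ∧ term ∈ Ψ ∧
      M.StochasticInvariant σ Ψ p ∧
      ∀ 𝔰 : Scheduler M, M.hitProb 𝔰 σ ({term} ∪ Ψᶜ) = 1 :=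
  lower_bound_rule_complete_finite_general M term σ hterm p hp1 hlb
end
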